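/- arXiv:2304.11590 — 2 statements merged into one kernel-verified Lean document; each statement's English description precedes it below -/
import Mathlib

section
/- Let u, ψ, φ : ℝ × I → ℝ be smooth (I an open interval) and λ ∈ ℝ, and suppose ∂_x² ψ = (u − λ) ψ, ∂_x² φ = (u − λ) φ, ∂_t ψ = (∂_x u) ψ − 2(u + 2λ) ∂_x ψ, and ∂_t φ = (∂_x u) φ − 2(u + 2λ) ∂_x φ. Then the Wronskian α = (∂_x ψ) φ − ψ (∂_x φ) satisfies ∂_x α = 0 and ∂_t α = 0, i.e. α is constant on ℝ × I. -/
open Set Function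

noncomputable section

/-- Partial derivative in the first (space) variable. -/
def pdx (u : ℝ → ℝ → ℝ) : ℝ → ℝ → ℝ := fun x t => deriv (fun x' => u x' t) x

/-- Partial derivative in the second (time) variable. -/
def pdt (u : ℝ → ℝ → ℝ) : ℝ → ℝ → ℝ := fun x t => deriv (fun t' => u x t') t

/-!
Differentiating `α = ψₓφ − ψφₓ` in `x` leaves `ψₓₓφ − ψφₓₓ`, which vanishes because `ψ` and `φ`
solve the same Schrödinger equation. In `t`, Clairaut's theorem turns `(ψₓ)ₜ` into `(ψₜ)ₓ`;
differentiating the flow equation in `x` and substituting the Schrödinger equation again gives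
`(ψₜ)ₓ = uₓₓψ − uₓψₓ − 2(u + 2λ)(u − λ)ψ`, and then every term of `∂ₜα` cancels against
another. With both partial derivatives zero, `α` is constant on the connected set `ℝ × I`.
-/

section Slices

variable {E : Type*} [NormedAddCommGroup E] [NormedSpace ℝ E] {g : ℝ × ℝ → E} {x t : ℝ}

theorem DifferentiableAt.hasDerivAt_slice_fst (hg : DifferentiableAt ℝ g (x, t)) :
    HasDerivAt (fun x' => g (x', t)) (fderiv ℝ g (x, t) (1, 0)) x :=
  hg.hasFDerivAt.comp_hasDerivAt x ((hasDerivAt_id x).prodMk (hasDerivAt_const x t))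

theorem DifferentiableAt.hasDerivAt_slice_snd (hg : DifferentiableAt ℝ g (x, t)) :
    HasDerivAt (fun t' => g (x, t')) (fderiv ℝ g (x, t) (0, 1)) t :=
  hg.hasFDerivAt.comp_hasDerivAt t ((hasDerivAt_const t x).prodMk (hasDerivAt_id t))

theorem ContDiffAt.deriv_deriv_slice_comm (hg : ContDiffAt ℝ 2 g (x, t)) :
    deriv (fun t' => deriv (fun x' => g (x', t')) x) t
      = deriv (fun x' => deriv (fun t' => g (x', t')) t) x := by
  have hdiff : ∀ᶠ q in nhds (x, t), DifferentiableAt ℝ g q :=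
    (hg.eventually (by simp)).mono fun q hq => hq.differentiableAt (by simp)
  have hg' : DifferentiableAt ℝ (fderiv ℝ g) (x, t) :=
    (hg.fderiv_right (m := 1) le_rfl).differentiableAt (by simp)
  have hx : (fun t' => deriv (fun x' => g (x', t')) x) =ᶠ[nhds t]
      fun t' => fderiv ℝ g (x, t') (1, 0) :=
    ((continuous_const.prodMk continuous_id).tendsto t |>.eventually hdiff).mono
      fun t' h => h.hasDerivAt_slice_fst.deriv
  have ht : (fun x' => deriv (fun t' => g (x', t')) t) =ᶠ[nhds x]
      fun x' => fderiv ℝ g (x', t) (0, 1) :=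
    ((continuous_id.prodMk continuous_const).tendsto x |>.eventually hdiff).mono
      fun x' h => h.hasDerivAt_slice_snd.deriv
  rw [hx.deriv_eq, ht.deriv_eq,
    (hg'.hasDerivAt_slice_snd.clm_apply (hasDerivAt_const t ((1 : ℝ), (0 : ℝ)))).deriv,
    (hg'.hasDerivAt_slice_fst.clm_apply (hasDerivAt_const x ((0 : ℝ), (1 : ℝ)))).deriv]
  simpa using hg.isSymmSndFDerivAt (by simp) (0, 1) (1, 0)

end Slices

section Partials

variable {I : Set ℝ} {f : ℝ → ℝ → ℝ} {x t : ℝ}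

theorem contDiffAt_uncurry_of_mem (hI : IsOpen I)
    (hf : ContDiffOn ℝ (⊤ : ℕ∞) (uncurry f) (univ ×ˢ I)) (ht : t ∈ I) :
    ContDiffAt ℝ (⊤ : ℕ∞) (uncurry f) (x, t) :=
  hf.contDiffAt ((isOpen_univ.prod hI).mem_nhds ⟨trivial, ht⟩)

theorem pdx_eq_fderiv (hI : IsOpen I) (hf : ContDiffOn ℝ (⊤ : ℕ∞) (uncurry f) (univ ×ˢ I))
    (ht : t ∈ I) : pdx f x t = fderiv ℝ (uncurry f) (x, t) (1, 0) :=
  ((contDiffAt_uncurry_of_mem hI hf ht).differentiableAt (by simp)).hasDerivAt_slice_fst.deriv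

theorem hasDerivAt_pdx (hI : IsOpen I) (hf : ContDiffOn ℝ (⊤ : ℕ∞) (uncurry f) (univ ×ˢ I))
    (ht : t ∈ I) : HasDerivAt (fun x' => f x' t) (pdx f x t) x :=
  ((contDiffAt_uncurry_of_mem hI hf ht).differentiableAt (by simp)).hasDerivAt_slice_fst
    |>.differentiableAt.hasDerivAt

theorem hasDerivAt_pdt (hI : IsOpen I) (hf : ContDiffOn ℝ (⊤ : ℕ∞) (uncurry f) (univ ×ˢ I))
    (ht : t ∈ I) : HasDerivAt (fun t' => f x t') (pdt f x t) t :=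
  ((contDiffAt_uncurry_of_mem hI hf ht).differentiableAt (by simp)).hasDerivAt_slice_snd
    |>.differentiableAt.hasDerivAt

theorem contDiffOn_pdx (hI : IsOpen I) (hf : ContDiffOn ℝ (⊤ : ℕ∞) (uncurry f) (univ ×ˢ I)) :
    ContDiffOn ℝ (⊤ : ℕ∞) (uncurry (pdx f)) (univ ×ˢ I) :=
  ((hf.fderiv_of_isOpen (isOpen_univ.prod hI) (by exact_mod_cast le_top)).clm_apply
    contDiffOn_const).congr fun p hp => pdx_eq_fderiv hI hf hp.2

theorem pdt_pdx_comm (hI : IsOpen I) (hf : ContDiffOn ℝ (⊤ : ℕ∞) (uncurry f) (univ ×ˢ I))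
    (ht : t ∈ I) : pdt (pdx f) x t = pdx (pdt f) x t :=
  ((contDiffAt_uncurry_of_mem hI hf ht).of_le
    (WithTop.coe_le_coe.mpr le_top)).deriv_deriv_slice_comm

end Partials

theorem exists_eq_const_of_hasDerivAt_slices_zero {E : Type*} [NormedAddCommGroup E]
    [NormedSpace ℝ E] {I : Set ℝ} {g : ℝ → ℝ → E} (hI : IsOpen I) (hI' : IsPreconnected I)
    (hx : ∀ x t, t ∈ I → HasDerivAt (fun x' => g x' t) 0 x)
    (ht : ∀ x t, t ∈ I → HasDerivAt (fun t' => g x t') 0 t) :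
    ∃ c, ∀ x t, t ∈ I → g x t = c := by
  obtain ⟨c, hc⟩ := hI.exists_is_const_of_deriv_eq_zero hI' (f := g 0)
    (fun t h => (ht 0 t h).differentiableAt.differentiableWithinAt) (fun t h => (ht 0 t h).deriv)
  refine ⟨c, fun x t h => ?_⟩
  rw [← hc t h]
  exact is_const_of_deriv_eq_zero (fun x => (hx x t h).differentiableAt)
    (fun x => (hx x t h).deriv) x 0

namespace KdV

def wronskian (psi phi : ℝ → ℝ → ℝ) : ℝ → ℝ → ℝ :=
  fun x t => pdx psi x t * phi x t - psi x t * pdx phi x t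

variable {I : Set ℝ} {u psi phi : ℝ → ℝ → ℝ} {l x t : ℝ}

theorem hasDerivAt_wronskian_x (hI : IsOpen I)
    (hpsi : ContDiffOn ℝ (⊤ : ℕ∞) (uncurry psi) (univ ×ˢ I))
    (hphi : ContDiffOn ℝ (⊤ : ℕ∞) (uncurry phi) (univ ×ˢ I)) (ht : t ∈ I) :
    HasDerivAt (fun x' => wronskian psi phi x' t)
      (pdx (pdx psi) x t * phi x t - psi x t * pdx (pdx phi) x t) x := by
  have hpsix := contDiffOn_pdx hI hpsi
  have hphix := contDiffOn_pdx hI hphi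
  refine (((hasDerivAt_pdx hI hpsix ht).mul (hasDerivAt_pdx hI hphi ht)).sub
    ((hasDerivAt_pdx hI hpsi ht).mul (hasDerivAt_pdx hI hphix ht))).congr_deriv ?_
  ring

theorem hasDerivAt_wronskian_t (hI : IsOpen I)
    (hpsi : ContDiffOn ℝ (⊤ : ℕ∞) (uncurry psi) (univ ×ˢ I))
    (hphi : ContDiffOn ℝ (⊤ : ℕ∞) (uncurry phi) (univ ×ˢ I)) (ht : t ∈ I) :
    HasDerivAt (fun t' => wronskian psi phi x t')
      (pdx (pdt psi) x t * phi x t + pdx psi x t * pdt phi x t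
        - pdt psi x t * pdx phi x t - psi x t * pdx (pdt phi) x t) t := by
  have hpsix := contDiffOn_pdx hI hpsi
  have hphix := contDiffOn_pdx hI hphi
  refine (((hasDerivAt_pdt hI hpsix ht).mul (hasDerivAt_pdt hI hphi ht)).sub
    ((hasDerivAt_pdt hI hpsi ht).mul (hasDerivAt_pdt hI hphix ht))).congr_deriv ?_
  rw [pdt_pdx_comm hI hpsi ht, pdt_pdx_comm hI hphi ht]
  ring

theorem pdx_pdt_eq_of_flow (hI : IsOpen I)
    (hu : ContDiffOn ℝ (⊤ : ℕ∞) (uncurry u) (univ ×ˢ I))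
    (hpsi : ContDiffOn ℝ (⊤ : ℕ∞) (uncurry psi) (univ ×ˢ I))
    (hpsixx : ∀ x t, t ∈ I → pdx (pdx psi) x t = (u x t - l) * psi x t)
    (hpsit : ∀ x t, t ∈ I →
      pdt psi x t = pdx u x t * psi x t - 2 * (u x t + 2 * l) * pdx psi x t)
    (ht : t ∈ I) :
    pdx (pdt psi) x t = pdx (pdx u) x t * psi x t - pdx u x t * pdx psi x t
      - 2 * (u x t + 2 * l) * (u x t - l) * psi x t := by
  have hflow : HasDerivAt (fun x' => pdx u x' t * psi x' t - 2 * (u x' t + 2 * l) * pdx psi x' t)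
      (pdx (pdx u) x t * psi x t + pdx u x t * pdx psi x t
        - (2 * pdx u x t * pdx psi x t + 2 * (u x t + 2 * l) * pdx (pdx psi) x t)) x :=
    ((hasDerivAt_pdx hI (contDiffOn_pdx hI hu) ht).mul (hasDerivAt_pdx hI hpsi ht)).sub
      ((((hasDerivAt_pdx hI hu ht).add_const (2 * l)).const_mul 2).mul
        (hasDerivAt_pdx hI (contDiffOn_pdx hI hpsi) ht))
  change deriv (fun x' => pdt psi x' t) x = _
  rw [funext fun x' => hpsit x' t ht, hflow.deriv, hpsixx x t ht]
  ring

end KdV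

/-- for two solutions `ψ, φ` of the same Schrödinger equation with potential `u`
and eigenvalue `λ`, evolving under the KdV-induced flow, the Wronskian
`α = ψₓφ − ψφₓ` satisfies `∂ₓα = ∂ₜα = 0`, i.e. it is constant on `ℝ × I`. -/
theorem statement8
    (a b : ℝ) (I : Set ℝ) (hI : I = Set.Ioo a b)
    (u psi phi : ℝ → ℝ → ℝ) (l : ℝ)
    (hu : ContDiffOn ℝ (⊤ : ℕ∞) (uncurry u) (univ ×ˢ I))
    (hpsi : ContDiffOn ℝ (⊤ : ℕ∞) (uncurry psi) (univ ×ˢ I))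
    (hphi : ContDiffOn ℝ (⊤ : ℕ∞) (uncurry phi) (univ ×ˢ I))
    (hpsixx : ∀ x t, t ∈ I → pdx (pdx psi) x t = (u x t - l) * psi x t)
    (hphixx : ∀ x t, t ∈ I → pdx (pdx phi) x t = (u x t - l) * phi x t)
    (hpsit : ∀ x t, t ∈ I →
      pdt psi x t = pdx u x t * psi x t - 2*(u x t + 2*l) * pdx psi x t)
    (hphit : ∀ x t, t ∈ I →
      pdt phi x t = pdx u x t * phi x t - 2*(u x t + 2*l) * pdx phi x t)
    (A : ℝ → ℝ → ℝ)
    (hA : ∀ x t, A x t = pdx psi x t * phi x t - psi x t * pdx phi x t) :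
    (∀ x t, t ∈ I → pdx A x t = 0 ∧ pdt A x t = 0)
    ∧ ∃ c : ℝ, ∀ x t, t ∈ I → A x t = c := by
  have hIo : IsOpen I := hI ▸ isOpen_Ioo
  obtain rfl : A = KdV.wronskian psi phi := funext fun x => funext (hA x)
  have hx : ∀ x t, t ∈ I → HasDerivAt (fun x' => KdV.wronskian psi phi x' t) 0 x := by
    intro x t ht
    refine (KdV.hasDerivAt_wronskian_x hIo hpsi hphi ht).congr_deriv ?_
    rw [hpsixx x t ht, hphixx x t ht]
    ring
  have ht : ∀ x t, t ∈ I → HasDerivAt (fun t' => KdV.wronskian psi phi x t') 0 t := by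
    intro x t ht
    refine (KdV.hasDerivAt_wronskian_t hIo hpsi hphi ht).congr_deriv ?_
    rw [KdV.pdx_pdt_eq_of_flow hIo hu hpsi hpsixx hpsit ht,
      KdV.pdx_pdt_eq_of_flow hIo hu hphi hphixx hphit ht, hpsit x t ht, hphit x t ht]
    ring
  exact ⟨fun x t h => ⟨(hx x t h).deriv, (ht x t h).deriv⟩,
    exists_eq_const_of_hasDerivAt_slices_zero hIo (hI ▸ isPreconnected_Ioo) hx ht⟩
end
end

section
/- Let f : ℝ × I → ℝ be smooth (I an open interval) and μ ∈ ℝ, and suppose f satisfies the modified KdV equation ∂_t f = ∂_x³ f − 6(f² + μ) ∂_x f. Then both u := ∂_x f + f² + μ and ũ := −∂_x f + f² + μ satisfy the KdV equation ∂_t u = ∂_x³ u − 6 u ∂_x u on ℝ × I. -/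
/-!
For `ε² = 1` put `v = ε ∂ₓf + f² + μ` and let `M = ∂ₜf − ∂ₓ³f + 6(f² + μ) ∂ₓf` be the mKdV
residual of `f`. Using `∂ₜ∂ₓf = ∂ₓ∂ₜf`, a direct computation gives
`∂ₜv − ∂ₓ³v + 6 v ∂ₓv = (ε ∂ₓ + 2f) M`, so `M = 0` on an open set forces `v` to solve KdV there.
-/

open Set Function

noncomputable section

open Filter Topology

section Slices

variable {E : Type*} [NormedAddCommGroup E] [NormedSpace ℝ E] {F : ℝ × ℝ → E}
  {F' : ℝ × ℝ →L[ℝ] E} {x t : ℝ}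

theorem HasFDerivAt.hasDerivAt_fst_slice (h : HasFDerivAt F F' (x, t)) :
    HasDerivAt (fun x' => F (x', t)) (F' (1, 0)) x :=
  h.comp_hasDerivAt x ((hasDerivAt_id x).prodMk (hasDerivAt_const x t))

theorem HasFDerivAt.hasDerivAt_snd_slice (h : HasFDerivAt F F' (x, t)) :
    HasDerivAt (fun t' => F (x, t')) (F' (0, 1)) t :=
  h.comp_hasDerivAt t ((hasDerivAt_const t x).prodMk (hasDerivAt_id t))

end Slices

section PartialDerivatives

variable {g k : ℝ → ℝ → ℝ} {x t : ℝ}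

theorem pdx_eq_fderiv_s9 (hg : DifferentiableAt ℝ (uncurry g) (x, t)) :
    pdx g x t = fderiv ℝ (uncurry g) (x, t) (1, 0) :=
  hg.hasFDerivAt.hasDerivAt_fst_slice.deriv

theorem pdt_eq_fderiv (hg : DifferentiableAt ℝ (uncurry g) (x, t)) :
    pdt g x t = fderiv ℝ (uncurry g) (x, t) (0, 1) :=
  hg.hasFDerivAt.hasDerivAt_snd_slice.deriv

theorem DifferentiableAt.hasDerivAt_pdx (hg : DifferentiableAt ℝ (uncurry g) (x, t)) :
    HasDerivAt (fun x' => g x' t) (pdx g x t) x :=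
  pdx_eq_fderiv_s9 hg ▸ hg.hasFDerivAt.hasDerivAt_fst_slice

theorem DifferentiableAt.hasDerivAt_pdt (hg : DifferentiableAt ℝ (uncurry g) (x, t)) :
    HasDerivAt (fun t' => g x t') (pdt g x t) t :=
  pdt_eq_fderiv hg ▸ hg.hasFDerivAt.hasDerivAt_snd_slice

theorem pdx_congr (h : uncurry g =ᶠ[𝓝 (x, t)] uncurry k) : pdx g x t = pdx k x t :=
  (h.comp_tendsto ((continuous_id.prodMk continuous_const).tendsto x)).deriv_eq

theorem pdt_congr (h : uncurry g =ᶠ[𝓝 (x, t)] uncurry k) : pdt g x t = pdt k x t :=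
  (h.comp_tendsto ((continuous_const.prodMk continuous_id).tendsto t)).deriv_eq

theorem ContDiffOn.hasDerivAt_pdx {s : Set (ℝ × ℝ)} {n : WithTop ℕ∞}
    (hg : ContDiffOn ℝ n (uncurry g) s) (hs : IsOpen s) (hn : n ≠ 0) (hxt : (x, t) ∈ s) :
    HasDerivAt (fun x' => g x' t) (pdx g x t) x :=
  ((hg.contDiffAt (hs.mem_nhds hxt)).differentiableAt hn).hasDerivAt_pdx

theorem ContDiffOn.hasDerivAt_pdt {s : Set (ℝ × ℝ)} {n : WithTop ℕ∞}
    (hg : ContDiffOn ℝ n (uncurry g) s) (hs : IsOpen s) (hn : n ≠ 0) (hxt : (x, t) ∈ s) :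
    HasDerivAt (fun t' => g x t') (pdt g x t) t :=
  ((hg.contDiffAt (hs.mem_nhds hxt)).differentiableAt hn).hasDerivAt_pdt

theorem ContDiffOn.pdx {s : Set (ℝ × ℝ)} {m n : WithTop ℕ∞}
    (hg : ContDiffOn ℝ n (uncurry g) s) (hs : IsOpen s) (hmn : m + 1 ≤ n) :
    ContDiffOn ℝ m (uncurry (pdx g)) s := by
  refine ((hg.fderiv_of_isOpen hs hmn).clm_apply (contDiffOn_const (c := ((1 : ℝ), (0 : ℝ))))).congr
    fun p hp => ?_
  have hn : n ≠ 0 := ne_bot_of_le_ne_bot (by simp) (le_trans le_add_self hmn)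
  exact pdx_eq_fderiv_s9 ((hg.contDiffAt (hs.mem_nhds hp)).differentiableAt hn)

theorem pdt_pdx_comm_s9 (hg : ContDiffAt ℝ 2 (uncurry g) (x, t)) :
    pdt (pdx g) x t = pdx (pdt g) x t := by
  set F := uncurry g
  have hF : ∀ᶠ p in 𝓝 (x, t), DifferentiableAt ℝ F p :=
    (hg.eventually (by simp)).mono fun p hp => hp.differentiableAt (by simp)
  have hF' : HasFDerivAt (fderiv ℝ F) (fderiv ℝ (fderiv ℝ F) (x, t)) (x, t) :=
    ((hg.fderiv_right (m := 1) (by norm_num)).differentiableAt (by simp)).hasFDerivAt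
  have hpdx : uncurry (pdx g) =ᶠ[𝓝 (x, t)] uncurry fun x t => fderiv ℝ F (x, t) (1, 0) :=
    hF.mono fun p hp => pdx_eq_fderiv_s9 hp
  have hpdt : uncurry (pdt g) =ᶠ[𝓝 (x, t)] uncurry fun x t => fderiv ℝ F (x, t) (0, 1) :=
    hF.mono fun p hp => pdt_eq_fderiv hp
  calc pdt (pdx g) x t = fderiv ℝ (fderiv ℝ F) (x, t) (0, 1) (1, 0) := by
        rw [pdt_congr hpdx]
        exact (hF'.hasDerivAt_snd_slice.clm_apply
          (hasDerivAt_const t ((1 : ℝ), (0 : ℝ)))).deriv.trans (by simp)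
    _ = fderiv ℝ (fderiv ℝ F) (x, t) (1, 0) (0, 1) := hg.isSymmSndFDerivAt (by simp) _ _
    _ = pdx (pdt g) x t := by
        rw [pdx_congr hpdt]
        exact ((hF'.hasDerivAt_fst_slice.clm_apply
          (hasDerivAt_const x ((0 : ℝ), (1 : ℝ)))).deriv.trans (by simp)).symm

end PartialDerivatives

def SolvesKdV (s : Set (ℝ × ℝ)) (u : ℝ → ℝ → ℝ) : Prop :=
  ∀ x t, (x, t) ∈ s → pdt u x t = pdx (pdx (pdx u)) x t - 6 * u x t * pdx u x t

def SolvesMKdV (s : Set (ℝ × ℝ)) (mu : ℝ) (f : ℝ → ℝ → ℝ) : Prop :=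
  ∀ x t, (x, t) ∈ s → pdt f x t = pdx (pdx (pdx f)) x t - 6 * (f x t ^ 2 + mu) * pdx f x t

/-- For `ε = 1` and `ε = -1` these are the two Miura maps `f ↦ ±∂ₓf + f² + μ`. -/
def miuraMap (ε mu : ℝ) (f : ℝ → ℝ → ℝ) : ℝ → ℝ → ℝ :=
  fun x t => ε * pdx f x t + f x t ^ 2 + mu

theorem SolvesMKdV.solvesKdV_miuraMap {s : Set (ℝ × ℝ)} (hs : IsOpen s) {f : ℝ → ℝ → ℝ}
    {mu ε : ℝ}
    (hf : ContDiffOn ℝ 4 (uncurry f) s) (hε : ε ^ 2 = 1) (hmkdv : SolvesMKdV s mu f) :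
    SolvesKdV s (miuraMap ε mu f) := by
  have near {g k : ℝ → ℝ → ℝ} (h : ∀ x t, (x, t) ∈ s → g x t = k x t) {x t : ℝ}
      (hxt : (x, t) ∈ s) : uncurry g =ᶠ[𝓝 (x, t)] uncurry k :=
    eventually_of_mem (hs.mem_nhds hxt) fun p hp => h p.1 p.2 hp
  have hf₁ : ContDiffOn ℝ 3 (uncurry (pdx f)) s := hf.pdx hs (by norm_num)
  have hf₂ : ContDiffOn ℝ 2 (uncurry (pdx (pdx f))) s := hf₁.pdx hs (by norm_num)
  have hf₃ : ContDiffOn ℝ 1 (uncurry (pdx (pdx (pdx f)))) s := hf₂.pdx hs (by norm_num)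
  have d₀ {x t} (h : (x, t) ∈ s) := hf.hasDerivAt_pdx hs (by simp) h
  have d₁ {x t} (h : (x, t) ∈ s) := hf₁.hasDerivAt_pdx hs (by simp) h
  have d₂ {x t} (h : (x, t) ∈ s) := hf₂.hasDerivAt_pdx hs (by simp) h
  have d₃ {x t} (h : (x, t) ∈ s) := hf₃.hasDerivAt_pdx hs (by simp) h
  have hvx : ∀ x t, (x, t) ∈ s → pdx (miuraMap ε mu f) x t
      = ε * pdx (pdx f) x t + 2 * f x t * pdx f x t := fun x t h =>
    ((((d₁ h).const_mul ε).add ((d₀ h).pow 2)).add_const mu).deriv.trans (by ring)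
  have hvxx : ∀ x t, (x, t) ∈ s → pdx (pdx (miuraMap ε mu f)) x t
      = ε * pdx (pdx (pdx f)) x t + 2 * pdx f x t ^ 2 + 2 * f x t * pdx (pdx f) x t := by
    intro x t h
    rw [pdx_congr (near hvx h)]
    exact (((d₂ h).const_mul ε).add (((d₀ h).const_mul 2).mul (d₁ h))).deriv.trans (by ring)
  intro x t hxt
  have hvxxx : pdx (pdx (pdx (miuraMap ε mu f))) x t
      = ε * pdx (pdx (pdx (pdx f))) x t + 6 * pdx f x t * pdx (pdx f) x t
        + 2 * f x t * pdx (pdx (pdx f)) x t := by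
    rw [pdx_congr (near hvxx hxt)]
    exact ((((d₃ hxt).const_mul ε).add (((d₁ hxt).pow 2).const_mul 2)).add
      (((d₀ hxt).const_mul 2).mul (d₂ hxt))).deriv.trans (by ring)
  have hvt : pdt (miuraMap ε mu f) x t = ε * pdt (pdx f) x t + 2 * f x t * pdt f x t :=
    ((((hf₁.hasDerivAt_pdt hs (by simp) hxt).const_mul ε).add
      ((hf.hasDerivAt_pdt hs (by simp) hxt).pow 2)).add_const mu).deriv.trans (by ring)
  have hfxt : pdt (pdx f) x t = pdx (pdx (pdx (pdx f))) x t
      - 12 * f x t * pdx f x t ^ 2 - 6 * (f x t ^ 2 + mu) * pdx (pdx f) x t := by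
    rw [pdt_pdx_comm_s9 ((hf.contDiffAt (hs.mem_nhds hxt)).of_le (by norm_num)),
      pdx_congr (near hmkdv hxt)]
    exact ((d₃ hxt).sub (((((d₀ hxt).pow 2).add_const mu).const_mul 6).mul (d₁ hxt))).deriv.trans
      (by simp only [Pi.pow_apply]; ring)
  rw [hvt, hvxxx, hvx x t hxt, hfxt, hmkdv x t hxt]
  unfold miuraMap
  linear_combination 6 * pdx (pdx f) x t * pdx f x t * hε

/-- Miura maps: if `f` solves mKdV `∂ₜf = ∂ₓ³f − 6(f²+μ)∂ₓf`, then both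
`u = ∂ₓf + f² + μ` and `ũ = −∂ₓf + f² + μ` solve the KdV equation on `ℝ × I`. -/
theorem statement9
    (a b : ℝ) (I : Set ℝ) (hI : I = Set.Ioo a b)
    (f : ℝ → ℝ → ℝ) (mu : ℝ)
    (hf : ContDiffOn ℝ (⊤ : ℕ∞) (uncurry f) (univ ×ˢ I))
    (hmkdv : ∀ x t, t ∈ I →
      pdt f x t = pdx (pdx (pdx f)) x t - 6*((f x t)^2 + mu) * pdx f x t)
    (u ut : ℝ → ℝ → ℝ)
    (hu : ∀ x t, u x t = pdx f x t + (f x t)^2 + mu)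
    (hut : ∀ x t, ut x t = -(pdx f x t) + (f x t)^2 + mu) :
    (∀ x t, t ∈ I →
      pdt u x t = pdx (pdx (pdx u)) x t - 6 * u x t * pdx u x t)
    ∧ (∀ x t, t ∈ I →
      pdt ut x t = pdx (pdx (pdx ut)) x t - 6 * ut x t * pdx ut x t) := by
  subst hI
  have hs : IsOpen (univ ×ˢ Ioo a b : Set (ℝ × ℝ)) := isOpen_univ.prod isOpen_Ioo
  have hf₄ : ContDiffOn ℝ 4 (uncurry f) (univ ×ˢ Ioo a b) :=
    hf.of_le (WithTop.coe_le_coe.2 le_top)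
  have hmkdv' : SolvesMKdV (univ ×ˢ Ioo a b) mu f := fun x t h => hmkdv x t h.2
  obtain rfl : u = miuraMap 1 mu f := funext₂ fun x t => by rw [hu, miuraMap, one_mul]
  obtain rfl : ut = miuraMap (-1) mu f := funext₂ fun x t => by rw [hut, miuraMap, neg_one_mul]
  exact ⟨fun x t ht => hmkdv'.solvesKdV_miuraMap hs hf₄ (by norm_num) x t ⟨mem_univ x, ht⟩,
    fun x t ht => hmkdv'.solvesKdV_miuraMap hs hf₄ (by norm_num) x t ⟨mem_univ x, ht⟩⟩
end
end
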